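/- arXiv:1705.06711 — 5 statements merged into one kernel-verified Lean document; each statement's English description precedes it below -/
import Mathlib

section
/- Let ρ ∈ M₂(ℂ) be a positive definite density matrix. Then there exists a unique Hermitian matrix K ∈ M₂(ℂ) which is positive semidefinite with det K = 0 (i.e., has spectrum {0, ε} with ε ≥ 0) such that ρ = exp(−K) / tr(exp(−K)). -/
open Matrix NormedSpace
open scoped ComplexOrder Pointwise

/-!
If `K ≥ 0` and `0 ∈ spectrum ℝ K`, the spectrum of `exp (-K)` has greatest element `1`, so in
`ρ = c • exp (-K)` with `c > 0` the constant `c` must be the largest eigenvalue `λ` of `ρ`. Hence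
`exp (-K) = λ⁻¹ • ρ` is determined by `ρ`, and so is `K`, since `log` inverts `exp` on self-adjoint
elements; conversely `K = -log (λ⁻¹ • ρ)` works. For a matrix, `0 ∈ spectrum ℝ K` means
`det K = 0`, and the trace normalisation of `exp (-K) ≥ 0` is a positive real factor.
-/

lemma isGreatest_spectrum_smul {𝕜 A : Type*} [Field 𝕜] [LinearOrder 𝕜] [IsStrictOrderedRing 𝕜]
    [Ring A] [Algebra 𝕜 A] {a : A} {c m : 𝕜} (hc : 0 < c) (h : IsGreatest (spectrum 𝕜 a) m) :
    IsGreatest (spectrum 𝕜 (c • a)) (c * m) := by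
  have hσ : spectrum 𝕜 (c • a) = c • spectrum 𝕜 a :=
    spectrum.unit_smul_eq_smul a (Units.mk0 c hc.ne')
  rw [hσ, ← Set.image_smul]
  exact (monotone_mul_left_of_nonneg hc.le).map_isGreatest h

section

variable {A : Type*} [NormedRing A] [StarRing A] [NormedAlgebra ℝ A] [PartialOrder A]
  [StarOrderedRing A] [ContinuousFunctionalCalculus ℝ A IsSelfAdjoint] [NonnegSpectrumClass ℝ A]

lemma isGreatest_spectrum_exp_neg {K : A} (hK : 0 ≤ K) (h0 : 0 ∈ spectrum ℝ K) :
    IsGreatest (spectrum ℝ (exp (-K))) 1 := by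
  have hleast : IsLeast (spectrum ℝ K) 0 := ⟨h0, fun _ hx => spectrum_nonneg_of_nonneg hK hx⟩
  have hspec : spectrum ℝ (exp (-K)) = (fun x => Real.exp (-x)) '' spectrum ℝ K := by
    rw [← CFC.real_exp_eq_normedSpace_exp (IsSelfAdjoint.of_nonneg hK).neg,
      cfc_map_spectrum Real.exp (-K), ← spectrum.neg_eq, ← Set.image_neg_eq_neg, Set.image_image]
  have hanti : Antitone fun x => Real.exp (-x) := fun _ _ h => Real.exp_le_exp.2 (neg_le_neg h)
  simpa [hspec] using hanti.map_isLeast hleast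

lemma eq_of_smul_exp_neg_eq {K₁ K₂ : A} {c₁ c₂ : ℝ} (hK₁ : 0 ≤ K₁) (h0₁ : 0 ∈ spectrum ℝ K₁)
    (hK₂ : 0 ≤ K₂) (h0₂ : 0 ∈ spectrum ℝ K₂) (hc₁ : 0 < c₁) (hc₂ : 0 < c₂)
    (h : c₁ • exp (-K₁) = c₂ • exp (-K₂)) : K₁ = K₂ := by
  have hc : c₁ = c₂ := by
    have g₁ := isGreatest_spectrum_smul hc₁ (isGreatest_spectrum_exp_neg hK₁ h0₁)
    have g₂ := isGreatest_spectrum_smul hc₂ (isGreatest_spectrum_exp_neg hK₂ h0₂)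
    rw [h] at g₁
    simpa using g₁.unique g₂
  subst hc
  have hexp : exp (-K₁) = exp (-K₂) := smul_right_injective A hc₁.ne' h
  rw [← neg_neg K₁, ← CFC.log_exp (-K₁) (IsSelfAdjoint.of_nonneg hK₁).neg, hexp,
    CFC.log_exp (-K₂) (IsSelfAdjoint.of_nonneg hK₂).neg, neg_neg]

lemma IsStrictlyPositive.exists_smul_exp_neg_eq [StarModule ℝ A] [Nontrivial A] {a : A}
    (ha : IsStrictlyPositive a) :
    ∃ K : A, 0 ≤ K ∧ 0 ∈ spectrum ℝ K ∧ ∃ c : ℝ, 0 < c ∧ c • exp (-K) = a := by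
  obtain ⟨m, hm⟩ :=
    (ContinuousFunctionalCalculus.isCompact_spectrum (R := ℝ) a).exists_isGreatest
      (ContinuousFunctionalCalculus.spectrum_nonempty a ha.isSelfAdjoint)
  have hm0 : 0 < m := ha.spectrum_pos hm.1
  set b := m⁻¹ • a
  have hb : IsGreatest (spectrum ℝ b) 1 := by
    simpa [inv_mul_cancel₀ hm0.ne'] using isGreatest_spectrum_smul (inv_pos.2 hm0) hm
  have hbpos : IsStrictlyPositive b := by
    rw [StarOrderedRing.isStrictlyPositive_iff_spectrum_pos (R := ℝ) b
      ((IsSelfAdjoint.all m⁻¹).smul ha.isSelfAdjoint),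
      spectrum.smul_eq_smul m⁻¹ a ⟨m, hm.1⟩]
    rintro _ ⟨x, hx, rfl⟩
    exact mul_pos (inv_pos.2 hm0) (ha.spectrum_pos hx)
  refine ⟨-CFC.log b, ?_, ?_, m, hm0, ?_⟩
  · rw [CFC.log, ← cfc_neg]
    exact cfc_nonneg fun x hx =>
      neg_nonneg.2 (Real.log_nonpos (hbpos.spectrum_pos hx).le (hb.2 hx))
  · rw [← spectrum.neg_eq, CFC.log, cfc_map_spectrum Real.log b
      (hf := Real.continuousOn_log.mono fun x hx => (hbpos.spectrum_pos hx).ne'),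
      Set.mem_neg, neg_zero]
    exact ⟨1, hb.1, Real.log_one⟩
  · rw [neg_neg, CFC.exp_log b, smul_inv_smul₀ hm0.ne']

end

namespace Matrix

variable {n : Type*} [Fintype n]

lemma zero_mem_spectrum_iff_det_eq_zero [DecidableEq n] {R 𝕜 : Type*} [CommSemiring R] [Field 𝕜]
    [Algebra R 𝕜] {A : Matrix n n 𝕜} : 0 ∈ spectrum R A ↔ A.det = 0 := by
  rw [spectrum.zero_mem_iff, isUnit_iff_isUnit_det, isUnit_iff_ne_zero, not_not]

lemma IsHermitian.posSemidef_exp [DecidableEq n] {H : Matrix n n ℂ} (hH : H.IsHermitian) :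
    (NormedSpace.exp H).PosSemidef := by
  open scoped Matrix.Norms.L2Operator MatrixOrder in
  exact hH.isSelfAdjoint.exp_nonneg.posSemidef

lemma eq_inv_trace_smul_iff {E ρ : Matrix n n ℂ} (hE : E.PosSemidef) (hρ : ρ.trace = 1) :
    ρ = (E.trace)⁻¹ • E ↔ ∃ c : ℝ, 0 < c ∧ c • E = ρ := by
  constructor
  · rintro rfl
    have htr : E.trace ≠ 0 := by
      rintro h
      simp [h] at hρ
    obtain ⟨r, hr, hrE⟩ :=
      RCLike.pos_iff_exists_ofReal.1 (lt_of_le_of_ne hE.trace_nonneg htr.symm)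
    rw [RCLike.ofReal_eq_complex_ofReal] at hrE
    refine ⟨r⁻¹, inv_pos.2 hr, ?_⟩
    rw [← hrE, ← Complex.coe_smul, Complex.ofReal_inv]
  · rintro ⟨c, -, rfl⟩
    rw [trace_smul, ← Complex.coe_smul, smul_eq_mul] at hρ
    rw [inv_eq_of_mul_eq_one_left hρ, Complex.coe_smul]

end Matrix

/-- Lemma 1 (Appendix A): a positive definite density matrix `ρ` on `M₂(ℂ)` can be written
uniquely as `ρ = exp(−K)/tr(exp(−K))` with `K` Hermitian, positive semidefinite and
`det K = 0` (i.e. with spectrum `{0, ε ≥ 0}`). -/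
theorem gibbs_K_existsUnique
    (ρ : Matrix (Fin 2) (Fin 2) ℂ) (hρ : ρ.PosDef) (hρtr : ρ.trace = 1) :
    ∃! K : Matrix (Fin 2) (Fin 2) ℂ,
      K.IsHermitian ∧ K.PosSemidef ∧ K.det = 0 ∧
        ρ = ((exp (-K)).trace)⁻¹ • exp (-K) := by
  open scoped Matrix.Norms.L2Operator MatrixOrder in
  have normalize {M : Matrix (Fin 2) (Fin 2) ℂ} (hM : M.PosSemidef) :
      ρ = ((exp (-M)).trace)⁻¹ • exp (-M) ↔ ∃ c : ℝ, 0 < c ∧ c • exp (-M) = ρ :=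
    eq_inv_trace_smul_iff hM.isHermitian.neg.posSemidef_exp hρtr
  obtain ⟨K, hK, hK0, c, hc, hKρ⟩ := hρ.isStrictlyPositive.exists_smul_exp_neg_eq
  refine ⟨K, ⟨hK.posSemidef.isHermitian, hK.posSemidef, zero_mem_spectrum_iff_det_eq_zero.1 hK0,
    (normalize hK.posSemidef).2 ⟨c, hc, hKρ⟩⟩, ?_⟩
  rintro L ⟨-, hL, hL0, hLρ⟩
  obtain ⟨d, hd, hLρ'⟩ := (normalize hL).1 hLρ
  exact eq_of_smul_exp_neg_eq hL.nonneg (zero_mem_spectrum_iff_det_eq_zero.2 hL0) hK hK0 hd hc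
    (hLρ'.trans hKρ.symm)
end

section
/- Let ρ ∈ M₂(ℂ) be a positive definite density matrix. Suppose β₁, β₂ > 0 are real numbers and H₁, H₂ ∈ M₂(ℂ) are Hermitian, positive semidefinite with det H₁ = det H₂ = 0, and ρ = exp(−β₁·H₁)/tr(exp(−β₁·H₁)) = exp(−β₂·H₂)/tr(exp(−β₂·H₂)). Then β₁·H₁ = β₂·H₂; in particular, H₂ = (β₁/β₂)·H₁, so the pair (β, H) in the Gibbs representation of ρ is unique up to the simultaneous scaling β ↦ λβ, H ↦ λ⁻¹H with λ > 0. -/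
/-!
For a `2 × 2` matrix `A` with `det A = 0`, Cayley–Hamilton gives `A² = (tr A) • A`, so the
exponential series collapses to `exp A = 1 + exprel (tr A) • A`. Hence `tr (exp A) = 1 + e^{tr A}`
and `det (exp A) = e^{tr A}`. For `A = -β H` the trace `t = -β tr H` is real and nonpositive, and
the determinant of the normalised state is `eᵗ / (1 + eᵗ)²`, an injective function of
`eᵗ ∈ (0, 1]`. So `ρ` determines `t`, then `exp A`, and finally `A`, since `exprel t ≠ 0`.
-/

open Matrix NormedSpace
open scoped ComplexOrder Nat

section
variable {𝕂 : Type*} [RCLike 𝕂]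

/-- `(eᵗ - 1) / t`, with value `1` at `t = 0`. -/
noncomputable def exprel (t : 𝕂) : 𝕂 := ∑' n : ℕ, ((n + 1)! : 𝕂)⁻¹ * t ^ n

theorem summable_exprel (t : 𝕂) : Summable fun n : ℕ => ((n + 1)! : 𝕂)⁻¹ * t ^ n := by
  refine .of_norm_bounded (norm_expSeries_summable' (𝕂 := 𝕂) t) fun n => ?_
  simp only [norm_mul, norm_smul, norm_pow, norm_inv, RCLike.norm_natCast]
  gcongr
  exact n.le_succ

theorem exprel_zero : exprel (0 : 𝕂) = 1 := by
  rw [exprel, tsum_eq_single 0 fun n hn => by simp [hn]]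
  simp

theorem exp_eq_one_add_exprel_smul {𝔸 : Type*} [NormedRing 𝔸] [NormedAlgebra 𝕂 𝔸]
    [CompleteSpace 𝔸] {a : 𝔸} {t : 𝕂} (h : a * a = t • a) : exp a = 1 + exprel t • a := by
  have hpow : ∀ n : ℕ, a ^ (n + 1) = t ^ n • a := by
    intro n
    induction n with
    | zero => simp
    | succ n ih => rw [pow_succ, ih, smul_mul_assoc, h, smul_smul, pow_succ]
  have htail : HasSum (fun n : ℕ => ((n + 1)! : 𝕂)⁻¹ • a ^ (n + 1)) (exprel t • a) := by
    simp_rw [hpow, smul_smul]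
    exact (summable_exprel t).hasSum.smul_const a
  have hsum := (hasSum_nat_add_iff (f := fun n : ℕ => (n ! : 𝕂)⁻¹ • a ^ n) 1).mp htail
  simpa [add_comm] using (exp_series_hasSum_exp' (𝕂 := 𝕂) a).unique hsum

end

theorem exp_eq_one_add_mul_exprel (t : ℂ) : Complex.exp t = 1 + t * exprel t := by
  rw [Complex.exp_eq_exp_ℂ, exp_eq_one_add_exprel_smul (t := t) rfl, smul_eq_mul, mul_comm]

theorem exprel_ofReal_ne_zero (t : ℝ) : exprel (t : ℂ) ≠ 0 := by
  intro h
  have hexp : Real.exp t = 1 := by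
    have := exp_eq_one_add_mul_exprel t
    rw [h, mul_zero, add_zero, ← Complex.ofReal_exp] at this
    exact_mod_cast this
  rw [Real.exp_eq_one_iff] at hexp
  subst hexp
  simp [exprel_zero] at h

namespace Matrix
variable {R : Type*} [CommRing R]

theorem mul_self_eq_trace_smul_of_det_eq_zero {A : Matrix (Fin 2) (Fin 2) R} (h : A.det = 0) :
    A * A = A.trace • A := by
  nontriviality R
  have := A.aeval_self_charpoly
  simp only [charpoly_fin_two, h, map_sub, map_pow, map_mul, Polynomial.aeval_X,
    Polynomial.aeval_C, map_zero, add_zero] at this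
  rw [← sq, ← sub_eq_zero, ← this, Algebra.smul_def]

theorem det_one_add_smul_of_det_eq_zero {A : Matrix (Fin 2) (Fin 2) R} (h : A.det = 0) (s : R) :
    (1 + s • A).det = 1 + s * A.trace := by
  rw [det_fin_two] at h ⊢
  simp [trace_fin_two]
  linear_combination s ^ 2 * h

end Matrix

section
-- `exp` is defined topologically, so any normed-algebra structure on matrices will do.
attribute [local instance] Matrix.linftyOpNormedRing Matrix.linftyOpNormedAlgebra

namespace Matrix
variable {A : Matrix (Fin 2) (Fin 2) ℂ}

theorem exp_eq_one_add_exprel_trace_smul (h : A.det = 0) : exp A = 1 + exprel A.trace • A :=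
  exp_eq_one_add_exprel_smul (mul_self_eq_trace_smul_of_det_eq_zero h)

theorem trace_exp_of_det_eq_zero (h : A.det = 0) : (exp A).trace = 1 + Complex.exp A.trace := by
  rw [exp_eq_one_add_exprel_trace_smul h, trace_add, trace_one, trace_smul,
    exp_eq_one_add_mul_exprel, smul_eq_mul, Fintype.card_fin]
  push_cast
  ring

theorem det_exp_of_det_eq_zero (h : A.det = 0) : (exp A).det = Complex.exp A.trace := by
  rw [exp_eq_one_add_exprel_trace_smul h, det_one_add_smul_of_det_eq_zero h,
    exp_eq_one_add_mul_exprel, mul_comm]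

theorem det_trace_inv_smul_exp_of_det_eq_zero (h : A.det = 0) :
    ((exp A).trace⁻¹ • exp A).det = Complex.exp A.trace / (1 + Complex.exp A.trace) ^ 2 := by
  rw [det_smul, trace_exp_of_det_eq_zero h, det_exp_of_det_eq_zero h, Fintype.card_fin,
    div_eq_inv_mul, inv_pow]

end Matrix
end

theorem injOn_div_one_add_sq : Set.InjOn (fun x : ℝ => x / (1 + x) ^ 2) (Set.Icc 0 1) := by
  rintro x ⟨hx0, hx1⟩ y ⟨hy0, hy1⟩ h
  have hxy : (x - y) * (1 - x * y) = 0 := by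
    field_simp at h
    linear_combination h
  rcases mul_eq_zero.mp hxy with h | h
  · linarith
  · nlinarith

theorem Matrix.eq_of_trace_inv_smul_exp_eq {A B : Matrix (Fin 2) (Fin 2) ℂ} (hA : A.det = 0)
    (hB : B.det = 0) (hAtr : A.trace ≤ 0) (hBtr : B.trace ≤ 0)
    (h : (exp A).trace⁻¹ • exp A = (exp B).trace⁻¹ • exp B) : A = B := by
  obtain ⟨s, hs, hAs⟩ := RCLike.nonpos_iff_exists_ofReal.mp hAtr
  obtain ⟨t, ht, hBt⟩ := RCLike.nonpos_iff_exists_ofReal.mp hBtr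
  have hst : s = t := by
    have hdet := congrArg det h
    rw [det_trace_inv_smul_exp_of_det_eq_zero hA, det_trace_inv_smul_exp_of_det_eq_zero hB,
      ← hAs, ← hBt] at hdet
    refine Real.exp_injective (injOn_div_one_add_sq ?_ ?_ ?_)
    · exact ⟨(Real.exp_pos s).le, Real.exp_le_one_iff.mpr hs⟩
    · exact ⟨(Real.exp_pos t).le, Real.exp_le_one_iff.mpr ht⟩
    · dsimp only
      apply Complex.ofReal_injective
      push_cast
      exact hdet
  subst hst
  have hpartition : (1 + Complex.exp s) ≠ 0 := by
    exact_mod_cast (by positivity : (0 : ℝ) < 1 + Real.exp s).ne'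
  have hexp : exp A = exp B := by
    rw [trace_exp_of_det_eq_zero hA, trace_exp_of_det_eq_zero hB, ← hAs, ← hBt] at h
    exact smul_right_injective _ (inv_ne_zero hpartition) h
  rw [exp_eq_one_add_exprel_trace_smul hA, exp_eq_one_add_exprel_trace_smul hB, ← hAs, ← hBt]
    at hexp
  exact smul_right_injective _ (exprel_ofReal_ne_zero s) (add_left_cancel hexp)

theorem Matrix.PosSemidef.trace_neg_smul_nonpos {n : Type*} [Fintype n]
    {H : Matrix n n ℂ} (hH : H.PosSemidef) {β : ℝ} (hβ : 0 ≤ β) :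
    (-((β : ℂ) • H)).trace ≤ 0 := by
  rw [trace_neg, trace_smul, smul_eq_mul, neg_nonpos]
  exact mul_nonneg (by exact_mod_cast hβ) hH.trace_nonneg

theorem gibbs_unique_up_to_scaling_general
    (ρ : Matrix (Fin 2) (Fin 2) ℂ)
    (β₁ β₂ : ℝ) (hβ₁ : 0 < β₁) (hβ₂ : 0 < β₂)
    (H₁ H₂ : Matrix (Fin 2) (Fin 2) ℂ)
    (hH₁psd : H₁.PosSemidef) (hH₂psd : H₂.PosSemidef)
    (hH₁det : H₁.det = 0) (hH₂det : H₂.det = 0)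
    (hρ₁ : ρ = ((exp (-((β₁ : ℂ) • H₁))).trace)⁻¹ • exp (-((β₁ : ℂ) • H₁)))
    (hρ₂ : ρ = ((exp (-((β₂ : ℂ) • H₂))).trace)⁻¹ • exp (-((β₂ : ℂ) • H₂))) :
    (β₁ : ℂ) • H₁ = (β₂ : ℂ) • H₂ ∧ H₂ = ((β₁ / β₂ : ℝ) : ℂ) • H₁ := by
  have hneg : -((β₁ : ℂ) • H₁) = -((β₂ : ℂ) • H₂) :=
    eq_of_trace_inv_smul_exp_eq (by rw [← neg_smul, det_smul, hH₁det, mul_zero])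
      (by rw [← neg_smul, det_smul, hH₂det, mul_zero])
      (hH₁psd.trace_neg_smul_nonpos hβ₁.le) (hH₂psd.trace_neg_smul_nonpos hβ₂.le)
      (hρ₁.symm.trans hρ₂)
  have hscaled := neg_inj.mp hneg
  refine ⟨hscaled, ?_⟩
  rw [Complex.ofReal_div, div_eq_inv_mul, mul_smul, hscaled,
    inv_smul_smul₀ (by exact_mod_cast hβ₂.ne')]

/-- Lemma 2 (Appendix A): the Gibbs representation `ρ = exp(−βH)/tr(exp(−βH))` of a positive
definite density matrix by a positive semidefinite Hamiltonian with vanishing determinant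
is unique up to the simultaneous scaling `β ↦ λβ`, `H ↦ λ⁻¹H`: any two such representations
satisfy `β₁·H₁ = β₂·H₂`, and in particular `H₂ = (β₁/β₂)·H₁`. -/
theorem gibbs_unique_up_to_scaling
    (ρ : Matrix (Fin 2) (Fin 2) ℂ) (hρ : ρ.PosDef) (hρtr : ρ.trace = 1)
    (β₁ β₂ : ℝ) (hβ₁ : 0 < β₁) (hβ₂ : 0 < β₂)
    (H₁ H₂ : Matrix (Fin 2) (Fin 2) ℂ)
    (hH₁herm : H₁.IsHermitian) (hH₂herm : H₂.IsHermitian)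
    (hH₁psd : H₁.PosSemidef) (hH₂psd : H₂.PosSemidef)
    (hH₁det : H₁.det = 0) (hH₂det : H₂.det = 0)
    (hρ₁ : ρ = ((exp (-((β₁ : ℂ) • H₁))).trace)⁻¹ • exp (-((β₁ : ℂ) • H₁)))
    (hρ₂ : ρ = ((exp (-((β₂ : ℂ) • H₂))).trace)⁻¹ • exp (-((β₂ : ℂ) • H₂))) :
    (β₁ : ℂ) • H₁ = (β₂ : ℂ) • H₂ ∧ H₂ = ((β₁ / β₂ : ℝ) : ℂ) • H₁ :=
  gibbs_unique_up_to_scaling_general ρ β₁ β₂ hβ₁ hβ₂ H₁ H₂ hH₁psd hH₂psd hH₁det hH₂det hρ₁ hρ₂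
end

section
/- Let ρ₁, ρ₂ ∈ M₂(ℂ) be positive definite density matrices with ρ₁ ≠ (1/2)·1₂ and ρ₂ ≠ (1/2)·1₂, and let β > 0. Then there exist a Hermitian matrix H₁ ∈ M₂(ℂ), positive semidefinite with det H₁ = 0 and tr H₁ > 0, and Λ ∈ SL(2,ℂ), such that ρ₁ = exp(−β·H₁)/tr(exp(−β·H₁)) and ρ₂ = exp(−β·(Λ H₁ Λᴴ))/tr(exp(−β·(Λ H₁ Λᴴ))). In other words, any two non-maximally mixed thermal states on M₂(ℂ) are mapped to each other by the SL(2,ℂ) action on their thermal Hamiltonians. -/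
/-!
Diagonalise each state by a special unitary, `ρ = V diag(p, q) Vᴴ` with `p > q > 0`. Since a Gibbs
state does not change when a scalar is added to the Hamiltonian, `ρ` is the Gibbs state of
`V diag(0, ε) Vᴴ` with `ε = log (p / q) / β`. Two such Hamiltonians `Vᵢ diag(0, εᵢ) Vᵢᴴ` are related
by `Λ = V₂ diag(a⁻¹, a) V₁ᴴ` with `a² = ε₂ / ε₁`, and `det Λ = 1` because the `Vᵢ` are special
unitary.
-/

open Matrix NormedSpace
open scoped ComplexOrder

namespace Matrix

variable {n : Type*} [Fintype n] [DecidableEq n]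

theorem exp_unitary_conj {V : Matrix n n ℂ} (hV : V ∈ unitaryGroup n ℂ) (A : Matrix n n ℂ) :
    exp (V * A * Vᴴ) = V * exp A * Vᴴ := by
  have hinv : V⁻¹ = Vᴴ := inv_eq_left_inv (mem_unitaryGroup_iff'.mp hV)
  rw [← hinv]
  exact exp_conj V A (.of_mul_eq_one _ (mem_unitaryGroup_iff.mp hV))

theorem trace_unitary_conj {V : Matrix n n ℂ} (hV : V ∈ unitaryGroup n ℂ) (A : Matrix n n ℂ) :
    (V * A * Vᴴ).trace = A.trace := by
  rw [trace_mul_cycle, ← star_eq_conjTranspose, mem_unitaryGroup_iff'.mp hV, one_mul]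

noncomputable def gibbsState (β : ℝ) (H : Matrix n n ℂ) : Matrix n n ℂ :=
  (exp (-((β : ℂ) • H))).trace⁻¹ • exp (-((β : ℂ) • H))

theorem gibbsState_unitary_conj {V : Matrix n n ℂ} (hV : V ∈ unitaryGroup n ℂ) (β : ℝ)
    (H : Matrix n n ℂ) : gibbsState β (V * H * Vᴴ) = V * gibbsState β H * Vᴴ := by
  have hneg : -((β : ℂ) • (V * H * Vᴴ)) = V * -((β : ℂ) • H) * Vᴴ := by
    simp only [Matrix.mul_neg, Matrix.neg_mul, Matrix.mul_smul, Matrix.smul_mul]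
  simp only [gibbsState, hneg, exp_unitary_conj hV, trace_unitary_conj hV, Matrix.mul_smul,
    Matrix.smul_mul]

theorem gibbsState_diagonal (β : ℝ) (d : n → ℂ) :
    gibbsState β (diagonal d) =
      (∑ j, Complex.exp (-(β * d j)))⁻¹ • diagonal fun i ↦ Complex.exp (-(β * d i)) := by
  have hneg : -((β : ℂ) • diagonal d) = diagonal fun i ↦ -(β * d i) := by
    rw [← diagonal_smul, ← diagonal_neg]; rfl
  rw [gibbsState, hneg, exp_diagonal, trace_diagonal, Pi.exp_def, ← Complex.exp_eq_exp_ℂ]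

theorem gibbsState_diagonal_log {p : n → ℝ} (hp : ∀ i, 0 < p i) (hsum : ∑ i, p i = 1)
    {β : ℝ} (hβ : β ≠ 0) (c : ℝ) :
    gibbsState β (diagonal fun i ↦ (((c - Real.log (p i)) / β : ℝ) : ℂ)) =
      diagonal fun i ↦ (p i : ℂ) := by
  have hexp (i : n) : Complex.exp (-(β * (((c - Real.log (p i)) / β : ℝ) : ℂ))) =
      (Real.exp (-c) * p i : ℝ) := by
    rw [← Complex.ofReal_mul, ← Complex.ofReal_neg, ← Complex.ofReal_exp, mul_div_cancel₀ _ hβ,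
      neg_sub, Real.exp_sub, Real.exp_log (hp i), Real.exp_neg, div_eq_inv_mul]
  simp_rw [gibbsState_diagonal, hexp, ← Complex.ofReal_sum, ← Finset.mul_sum, hsum, mul_one,
    ← diagonal_smul]
  congr 1
  ext i
  simp only [Pi.smul_apply, smul_eq_mul, Complex.ofReal_mul]
  field_simp

theorem IsHermitian.exists_mem_specialUnitaryGroup_eq_conj_diagonal [Nonempty n]
    {A : Matrix n n ℂ} (hA : A.IsHermitian) :
    ∃ V ∈ specialUnitaryGroup n ℂ, A = V * diagonal (fun i ↦ (hA.eigenvalues i : ℂ)) * Vᴴ := by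
  obtain ⟨i₀⟩ := ‹Nonempty n›
  set U : Matrix n n ℂ := (hA.eigenvectorUnitary : Matrix n n ℂ)
  have hU : U ∈ unitaryGroup n ℂ := hA.eigenvectorUnitary.2
  have hdet : U.det * starRingEnd ℂ U.det = 1 := (det_of_mem_unitary hU).2
  -- a phase in one coordinate fixes the determinant without changing `U D Uᴴ`
  set P : Matrix n n ℂ := diagonal (Pi.mulSingle i₀ (star U.det))
  have hP : P * Pᴴ = 1 := by
    rw [diagonal_conjTranspose, diagonal_mul_diagonal, ← diagonal_one]
    congr 1
    ext i
    by_cases hi : i = i₀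
    · simpa [hi, mul_comm] using hdet
    · simp [hi]
  refine ⟨U * P, ⟨mul_mem hU (mem_unitaryGroup_iff.2 hP), ?_⟩, ?_⟩
  · simp [P, det_mul, det_diagonal, Finset.prod_pi_mulSingle', hdet]
  · set D : Matrix n n ℂ := diagonal fun i ↦ (hA.eigenvalues i : ℂ)
    calc A = U * D * Uᴴ := hA.spectral_theorem
      _ = U * (D * (P * Pᴴ)) * Uᴴ := by rw [hP, mul_one]
      _ = U * P * D * (U * P)ᴴ := by
        rw [conjTranspose_mul, ← mul_assoc D, ← (commute_diagonal _ _).eq]; noncomm_ring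

theorem conj_diagonal_fin_two_swap (a b : ℂ) :
    !![0, -1; 1, 0] * diagonal ![a, b] * (!![0, -1; 1, 0] : Matrix (Fin 2) (Fin 2) ℂ)ᴴ =
      diagonal ![b, a] := by
  ext i j
  fin_cases i <;> fin_cases j <;> simp [mul_apply, Fin.sum_univ_two, vecMul, dotProduct]

theorem fin_two_swap_mem_specialUnitaryGroup :
    (!![0, -1; 1, 0] : Matrix (Fin 2) (Fin 2) ℂ) ∈ specialUnitaryGroup (Fin 2) ℂ := by
  refine ⟨mem_unitaryGroup_iff.2 ?_, by simp [det_fin_two]⟩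
  ext i j
  fin_cases i <;> fin_cases j <;> simp [mul_apply, Fin.sum_univ_two]

theorem IsHermitian.exists_mem_specialUnitaryGroup_eq_conj_diagonal_max_min
    {A : Matrix (Fin 2) (Fin 2) ℂ} (hA : A.IsHermitian) :
    ∃ V ∈ specialUnitaryGroup (Fin 2) ℂ, A = V * diagonal
      ![((max (hA.eigenvalues 0) (hA.eigenvalues 1) : ℝ) : ℂ),
        ((min (hA.eigenvalues 0) (hA.eigenvalues 1) : ℝ) : ℂ)] * Vᴴ := by
  obtain ⟨U, hU, hAU⟩ := hA.exists_mem_specialUnitaryGroup_eq_conj_diagonal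
  have hD : (diagonal fun i ↦ (hA.eigenvalues i : ℂ)) =
      diagonal ![(hA.eigenvalues 0 : ℂ), hA.eigenvalues 1] := by
    congr 1; ext i; fin_cases i <;> rfl
  rw [hD] at hAU
  -- `hA.eigenvalues` comes in no particular order, so the eigenbasis may have to be swapped
  rcases le_total (hA.eigenvalues 1) (hA.eigenvalues 0) with h | h
  · exact ⟨U, hU, by rwa [max_eq_left h, min_eq_right h]⟩
  · refine ⟨U * !![0, -1; 1, 0], mul_mem hU fin_two_swap_mem_specialUnitaryGroup, ?_⟩
    rw [max_eq_right h, min_eq_left h, conjTranspose_mul]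
    conv_lhs => rw [hAU, ← conj_diagonal_fin_two_swap]
    noncomm_ring

theorem PosDef.exists_mem_specialUnitaryGroup_eq_gibbsState {ρ : Matrix (Fin 2) (Fin 2) ℂ}
    (hρ : ρ.PosDef) (htr : ρ.trace = 1) (hne : ρ ≠ (1 / 2 : ℂ) • 1) {β : ℝ} (hβ : 0 < β) :
    ∃ V ∈ specialUnitaryGroup (Fin 2) ℂ, ∃ ε : ℝ, 0 < ε ∧
      ρ = gibbsState β (V * diagonal ![0, (ε : ℂ)] * Vᴴ) := by
  obtain ⟨V, hV, hρV⟩ := hρ.1.exists_mem_specialUnitaryGroup_eq_conj_diagonal_max_min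
  set p := max (hρ.1.eigenvalues 0) (hρ.1.eigenvalues 1)
  set q := min (hρ.1.eigenvalues 0) (hρ.1.eigenvalues 1)
  have hq : 0 < q := lt_min (hρ.eigenvalues_pos 0) (hρ.eigenvalues_pos 1)
  have hsum : p + q = 1 := by
    have := hρ.1.trace_eq_sum_eigenvalues
    rw [htr, Fin.sum_univ_two] at this
    calc p + q = hρ.1.eigenvalues 0 + hρ.1.eigenvalues 1 := max_add_min _ _
      _ = 1 := by simpa using congrArg Complex.re this.symm
  have hqp : q < p := by
    refine min_le_max.lt_of_ne fun hqp ↦ hne ?_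
    have hVV : V * Vᴴ = 1 := mem_unitaryGroup_iff.1 hV.1
    have hscalar : diagonal ![(p : ℂ), (q : ℂ)] = (1 / 2 : ℂ) • 1 := by
      have hp : p = 1 / 2 := by linarith
      have hq : q = 1 / 2 := by linarith
      ext i j
      fin_cases i <;> fin_cases j <;> simp [hp, hq]
    rw [hρV, hscalar, Matrix.mul_smul, mul_one, Matrix.smul_mul, hVV]
  refine ⟨V, hV, (Real.log p - Real.log q) / β, div_pos (sub_pos.2 (Real.log_lt_log hq hqp)) hβ, ?_⟩
  have hpos (i : Fin 2) : 0 < ![p, q] i := by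
    fin_cases i
    exacts [hq.trans hqp, hq]
  have hd : ![(0 : ℂ), (((Real.log p - Real.log q) / β : ℝ) : ℂ)] =
      fun i ↦ (((Real.log p - Real.log (![p, q] i)) / β : ℝ) : ℂ) := by
    ext i
    fin_cases i <;> simp
  rw [gibbsState_unitary_conj hV.1, hd,
    gibbsState_diagonal_log hpos (by simp [Fin.sum_univ_two, hsum]) hβ.ne', hρV]
  congr 2
  ext i
  fin_cases i <;> rfl

theorem exists_det_eq_one_conj_diagonal_fin_two {ε₁ ε₂ : ℝ} (h₁ : 0 < ε₁) (h₂ : 0 < ε₂) :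
    ∃ M : Matrix (Fin 2) (Fin 2) ℂ,
      M.det = 1 ∧ M * diagonal ![0, (ε₁ : ℂ)] * Mᴴ = diagonal ![0, (ε₂ : ℂ)] := by
  set a := √(ε₂ / ε₁)
  have ha : (a : ℂ) ≠ 0 := by exact_mod_cast (Real.sqrt_pos.2 (div_pos h₂ h₁)).ne'
  have ha2 : a ^ 2 * ε₁ = ε₂ := by
    rw [Real.sq_sqrt (div_pos h₂ h₁).le]
    field_simp
  refine ⟨diagonal ![(a : ℂ)⁻¹, a], by simp [det_diagonal, ha], ?_⟩
  rw [diagonal_conjTranspose, diagonal_mul_diagonal, diagonal_mul_diagonal]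
  congr 1
  ext i
  fin_cases i
  · simp
  · simp only [Fin.mk_one, Pi.star_apply, cons_val_one, cons_val_zero, Complex.star_def,
      Complex.conj_ofReal]
    exact_mod_cast (by linear_combination ha2 : a * ε₁ * a = ε₂)

end Matrix

/-- Proposition 2: any two non-maximally mixed thermal states `ρ₁, ρ₂` on `M₂(ℂ)`
(positive definite density matrices different from `(1/2)·1₂`) are mapped to each other by
the action of `SL(2,ℂ)` on their thermal Hamiltonians: there are a Hamiltonian `H₁` with
spectrum `{0, ε > 0}` and `Λ ∈ SL(2,ℂ)` with `ρ₁ = exp(−βH₁)/tr(exp(−βH₁))` and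
`ρ₂ = exp(−β ΛH₁Λᴴ)/tr(exp(−β ΛH₁Λᴴ))`. -/
theorem nmm_thermal_states_lorentz_related
    (ρ₁ ρ₂ : Matrix (Fin 2) (Fin 2) ℂ)
    (hρ₁ : ρ₁.PosDef) (hρ₁tr : ρ₁.trace = 1)
    (hρ₂ : ρ₂.PosDef) (hρ₂tr : ρ₂.trace = 1)
    (hρ₁ne : ρ₁ ≠ (1/2 : ℂ) • (1 : Matrix (Fin 2) (Fin 2) ℂ))
    (hρ₂ne : ρ₂ ≠ (1/2 : ℂ) • (1 : Matrix (Fin 2) (Fin 2) ℂ))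
    (β : ℝ) (hβ : 0 < β) :
    ∃ (H₁ Λ : Matrix (Fin 2) (Fin 2) ℂ),
      H₁.IsHermitian ∧ H₁.PosSemidef ∧ H₁.det = 0 ∧ 0 < H₁.trace.re ∧
      Λ.det = 1 ∧
      ρ₁ = ((exp (-((β : ℂ) • H₁))).trace)⁻¹ • exp (-((β : ℂ) • H₁)) ∧
      ρ₂ = ((exp (-((β : ℂ) • (Λ * H₁ * Λᴴ)))).trace)⁻¹ •
              exp (-((β : ℂ) • (Λ * H₁ * Λᴴ))) := by
  obtain ⟨V₁, hV₁, ε₁, hε₁, h₁⟩ := hρ₁.exists_mem_specialUnitaryGroup_eq_gibbsState hρ₁tr hρ₁ne hβ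
  obtain ⟨V₂, hV₂, ε₂, hε₂, h₂⟩ := hρ₂.exists_mem_specialUnitaryGroup_eq_gibbsState hρ₂tr hρ₂ne hβ
  obtain ⟨M, hMdet, hM⟩ := exists_det_eq_one_conj_diagonal_fin_two hε₁ hε₂
  set D₁ : Matrix (Fin 2) (Fin 2) ℂ := diagonal ![0, (ε₁ : ℂ)]
  have hH₁ : (V₁ * D₁ * V₁ᴴ).PosSemidef := by
    refine PosSemidef.mul_mul_conjTranspose_same (posSemidef_diagonal_iff.2 fun i ↦ ?_) V₁
    fin_cases i
    exacts [le_rfl, by simpa using hε₁.le]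
  have hV₁V₁ : V₁ᴴ * V₁ = 1 := mem_unitaryGroup_iff'.1 hV₁.1
  have hconj : V₂ * M * V₁ᴴ * (V₁ * D₁ * V₁ᴴ) * (V₂ * M * V₁ᴴ)ᴴ = V₂ * (M * D₁ * Mᴴ) * V₂ᴴ :=
    calc _ = V₂ * M * (V₁ᴴ * V₁) * D₁ * (V₁ᴴ * V₁) * Mᴴ * V₂ᴴ := by
          simp only [conjTranspose_mul, conjTranspose_conjTranspose]; noncomm_ring
      _ = _ := by rw [hV₁V₁]; noncomm_ring
  refine ⟨V₁ * D₁ * V₁ᴴ, V₂ * M * V₁ᴴ, hH₁.isHermitian, hH₁, ?_, ?_, ?_, h₁, ?_⟩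
  · simp [D₁, det_mul, det_diagonal]
  · simpa [D₁, trace_unitary_conj hV₁.1, trace_diagonal] using hε₁
  · simp [det_mul, hMdet, (mem_specialUnitaryGroup_iff.1 hV₁).2,
      (mem_specialUnitaryGroup_iff.1 hV₂).2]
  · rw [hconj, hM]
    exact h₂
end

section
/- Let H, X ∈ M₂(ℂ) with det H = 0. Then [[X, H], H] = tr(H)²·Xᵒ − (2·tr(HX) − tr(H)·tr(X))·Hᵒ, where Xᵒ := X − (1/2)·tr(X)·1₂ and [X,Y] := XY − YX. -/
open Matrix

/-- The trace-free part `Xᵒ = X − (1/2)·tr(X)·1₂` of a `2×2` complex matrix. -/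
noncomputable def traceFree (X : Matrix (Fin 2) (Fin 2) ℂ) : Matrix (Fin 2) (Fin 2) ℂ :=
  X - ((1/2 : ℂ) * X.trace) • (1 : Matrix (Fin 2) (Fin 2) ℂ)

/-- Specialization of Lemma 3 to a degenerate matrix `H` (`det H = 0`):
`[[X,H],H] = tr(H)²·Xᵒ − (2·tr(HX) − tr(H)·tr(X))·Hᵒ`. -/
theorem matrix_triple_product_degenerate (H X : Matrix (Fin 2) (Fin 2) ℂ)
    (hH : H.det = 0) :
    (X * H - H * X) * H - H * (X * H - H * X) =
      (H.trace ^ 2) • traceFree X -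
        (2 * (H * X).trace - H.trace * X.trace) • traceFree H := by
  rw [Matrix.det_fin_two] at hH
  ext i j
  fin_cases i <;> fin_cases j <;>
    simp [traceFree, Matrix.mul_apply, Fin.sum_univ_two, Matrix.trace_fin_two,
      Matrix.one_apply]
  · linear_combination (2 * X 1 1 - 2 * X 0 0) * hH
  · linear_combination (-4 * X 0 1) * hH
  · linear_combination (-4 * X 1 0) * hH
  · linear_combination (2 * X 0 0 - 2 * X 1 1) * hH
end

section
/- Let H, δH ∈ M₂(ℂ) be Hermitian with det H = 0 and tr H ≠ 0. Define c := tr(H·δH)/tr(H) − tr(δH), τ := (2·tr(H·δH) − tr(H)·tr(δH))/tr(H), and Z := (1/tr(H)²)·( τ·(H − (1/2)·tr(H)·1₂) + [δH, H] ). Then tr(Z) = 0 and Z·H + H·Zᴴ = δH + c·1₂. -/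
open Matrix

/-- Verification of Equation (7): for Hermitian `H, δH` with `det H = 0` and `tr H ≠ 0`,
the matrix `Z = (1/tr(H)²)·(τ·(H − (1/2)tr(H)·1₂) + [δH,H])`, with
`c = tr(H·δH)/tr(H) − tr(δH)` and `τ = (2tr(H·δH) − tr(H)tr(δH))/tr(H)`, is traceless and
satisfies `Z·H + H·Zᴴ = δH + c·1₂`. -/
theorem infinitesimal_lorentz_generator
    (H δH : Matrix (Fin 2) (Fin 2) ℂ)
    (hHherm : H.IsHermitian) (hδHherm : δH.IsHermitian)
    (hHdet : H.det = 0) (hHtr : H.trace ≠ 0)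
    (c τ : ℂ) (Z : Matrix (Fin 2) (Fin 2) ℂ)
    (hc : c = (H * δH).trace / H.trace - δH.trace)
    (hτ : τ = (2 * (H * δH).trace - H.trace * δH.trace) / H.trace)
    (hZ : Z = (H.trace ^ 2)⁻¹ •
        (τ • (H - ((1/2 : ℂ) * H.trace) • (1 : Matrix (Fin 2) (Fin 2) ℂ)) +
          (δH * H - H * δH))) :
    Z.trace = 0 ∧
      Z * H + H * Zᴴ = δH + c • (1 : Matrix (Fin 2) (Fin 2) ℂ) := by
  have hdet : H 0 0 * H 1 1 - H 0 1 * H 1 0 = 0 := by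
    rw [Matrix.det_fin_two] at hHdet; exact hHdet
  have htH : star H.trace = H.trace := by
    rw [← Matrix.trace_conjTranspose, hHherm.eq]
  have hsH : star δH.trace = δH.trace := by
    rw [← Matrix.trace_conjTranspose, hδHherm.eq]
  have huH : star (H * δH).trace = (H * δH).trace := by
    rw [← Matrix.trace_conjTranspose, conjTranspose_mul, hHherm.eq, hδHherm.eq,
      Matrix.trace_mul_comm]
  have hτs : star τ = τ := by
    rw [hτ, star_div₀, star_sub, star_mul', star_mul', htH, hsH, huH]
    norm_num
  constructor
  · rw [hZ, trace_smul, trace_add, trace_smul, trace_sub, trace_sub, trace_smul,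
      trace_one, Matrix.trace_mul_comm δH H]
    simp
    right; right; ring
  · have hZ' : H.trace ^ 2 • Z =
        τ • (H - ((1/2 : ℂ) * H.trace) • (1 : Matrix (Fin 2) (Fin 2) ℂ)) +
          (δH * H - H * δH) := by
      rw [hZ, smul_smul, mul_inv_cancel₀ (pow_ne_zero 2 hHtr), one_smul]
    have hZc : H.trace ^ 2 • Zᴴ =
        τ • (H - ((1/2 : ℂ) * H.trace) • (1 : Matrix (Fin 2) (Fin 2) ℂ)) +
          (H * δH - δH * H) := by
      have h2 := congrArg conjTranspose hZ'
      rw [conjTranspose_smul, conjTranspose_add, conjTranspose_smul, conjTranspose_sub,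
        conjTranspose_sub, conjTranspose_smul, conjTranspose_one, conjTranspose_mul,
        conjTranspose_mul, hHherm.eq, hδHherm.eq, hτs, star_pow, htH, star_mul', htH] at h2
      simpa using h2
    have hc' : c * H.trace = (H * δH).trace - δH.trace * H.trace := by
      rw [hc, sub_mul, div_mul_cancel₀ _ hHtr]
    have hτ' : τ * H.trace = 2 * (H * δH).trace - H.trace * δH.trace := by
      rw [hτ, div_mul_cancel₀ _ hHtr]
    have hcancel : H.trace ^ 2 • (Z * H + H * Zᴴ) =
        H.trace ^ 2 • (δH + c • (1 : Matrix (Fin 2) (Fin 2) ℂ)) := by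
      rw [smul_add, ← Matrix.smul_mul, ← Matrix.mul_smul, hZ', hZc]
      simp only [Matrix.trace_fin_two, Matrix.mul_apply, Fin.sum_univ_two] at hc' hτ'
      ext i j
      fin_cases i <;> fin_cases j <;>
        simp only [Matrix.mul_apply, Matrix.add_apply, Matrix.sub_apply, Matrix.smul_apply,
          Matrix.one_apply, Fin.sum_univ_two, smul_eq_mul, Matrix.trace_fin_two, Fin.isValue,
          Fin.zero_eta, Fin.mk_one, if_true, one_ne_zero, zero_ne_one, if_false, mul_one,
          mul_zero, ite_true, ite_false, eq_self_iff_true, Fin.one_eq_zero_iff,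
          Fin.zero_eq_one_iff, Nat.succ_ne_self, ne_eq, OfNat.ofNat_ne_one, not_false_iff,
          reduceIte]
      · linear_combination H 0 0 * hτ' - 4 * δH 0 0 * hdet - (H 0 0 + H 1 1) * hc' -
          (2 * (τ - (δH 0 0 + δH 1 1))) * hdet
      · linear_combination H 0 1 * hτ' - 4 * δH 0 1 * hdet
      · linear_combination H 1 0 * hτ' - 4 * δH 1 0 * hdet
      · linear_combination H 1 1 * hτ' - 4 * δH 1 1 * hdet - (H 0 0 + H 1 1) * hc' -
          (2 * (τ - (δH 0 0 + δH 1 1))) * hdet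
    exact smul_right_injective _ (pow_ne_zero 2 hHtr) hcancel
end
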